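/- arXiv:1405.6502 — 4 statements merged into one kernel-verified Lean document; each statement's English description precedes it below -/
import Mathlib

section
/- Let T be a compact metric space with a regular σ-additive Borel measure μ, and X a Banach lattice with order-continuous norm. If f: T → X is order-Henstock integrable (i.e., there exist J ∈ X, an (o)-sequence (b_n) decreasing to 0, and gages (γ_n) such that |σ(f,Π) − J| ≤ b_n for every γ_n-fine Henstock partition Π), then f is norm-Henstock integrable and the two integrals coincide. -/
/-! The defining order estimate `|σ(f, Π) - J| ≤ bₙ` passes to norms because the norm is solid,
and order continuity makes `‖bₙ‖` small, so the single gage `γₙ` works for `ε` once `‖bₙ‖ ≤ ε`. -/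

open MeasureTheory Set Filter

/-- A tagged partition of the set `A`: finitely many pairwise disjoint measurable
sets covering `A`, each with a tag point. -/
structure TaggedPart (T : Type*) [MeasurableSpace T] (A : Set T) where
  k : ℕ
  E : Fin k → Set T
  tag : Fin k → T
  meas : ∀ i, MeasurableSet (E i)
  disj : ∀ i j, i ≠ j → Disjoint (E i) (E j)
  cover : (⋃ i, E i) = A

namespace TaggedPart

variable {T : Type*} [MeasurableSpace T] {A : Set T}

/-- A Henstock partition: each tag belongs to its set. -/
def IsHenstock (P : TaggedPart T A) : Prop := ∀ i, P.tag i ∈ P.E i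

/-- `γ`-fineness: each set is within distance `γ (tag)` of its tag. -/
def IsFine [PseudoMetricSpace T] (γ : T → ℝ) (P : TaggedPart T A) : Prop :=
  ∀ i, ∀ w ∈ P.E i, dist w (P.tag i) < γ (P.tag i)

/-- The Riemann sum `σ(f, P) = ∑ μ(Eᵢ) • f(tᵢ)`. -/
noncomputable def sum {X : Type*} [AddCommMonoid X] [Module ℝ X]
    (P : TaggedPart T A) (f : T → X) (μ : Measure T) : X :=
  ∑ i, (μ (P.E i)).toReal • f (P.tag i)

end TaggedPart

/-- A gage is a strictly positive function. -/
def IsGage {T : Type*} (γ : T → ℝ) : Prop := ∀ t, 0 < γ t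

/-- An (o)-sequence: decreasing with infimum `0`. -/
def IsOSeq {X : Type*} [Lattice X] [AddCommGroup X] (b : ℕ → X) : Prop :=
  Antitone b ∧ IsGLB (Set.range b) 0

section Defs

variable {T : Type*} [MeasurableSpace T] [PseudoMetricSpace T]
  {X : Type*} [NormedAddCommGroup X] [Lattice X] [HasSolidNorm X] [IsOrderedAddMonoid X] [NormedSpace ℝ X]

/-- Order-Henstock integrability of `f` on `A` with integral `J`. -/
def HasOHIntegralOn (f : T → X) (μ : Measure T) (A : Set T) (J : X) : Prop :=
  ∃ b : ℕ → X, IsOSeq b ∧ ∃ γ : ℕ → T → ℝ, (∀ n, IsGage (γ n)) ∧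
    ∀ n (P : TaggedPart T A), P.IsHenstock → P.IsFine (γ n) →
      |P.sum f μ - J| ≤ b n

/-- Order-McShane (free partition) integrability of `f` on `A` with integral `J`. -/
def HasOMIntegralOn (f : T → X) (μ : Measure T) (A : Set T) (J : X) : Prop :=
  ∃ b : ℕ → X, IsOSeq b ∧ ∃ γ : ℕ → T → ℝ, (∀ n, IsGage (γ n)) ∧
    ∀ n (P : TaggedPart T A), P.IsFine (γ n) → |P.sum f μ - J| ≤ b n

/-- Order-McShane integrability with a prescribed regulating (o)-sequence `b`. -/
def HasOMIntegralOnWith (f : T → X) (μ : Measure T) (A : Set T) (J : X)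
    (b : ℕ → X) : Prop :=
  ∃ γ : ℕ → T → ℝ, (∀ n, IsGage (γ n)) ∧
    ∀ n (P : TaggedPart T A), P.IsFine (γ n) → |P.sum f μ - J| ≤ b n

/-- Norm-Henstock integrability of `f` on `A` with integral `J`. -/
def HasNormHIntegralOn (f : T → X) (μ : Measure T) (A : Set T) (J : X) : Prop :=
  ∀ ε : ℝ, 0 < ε → ∃ γ : T → ℝ, IsGage γ ∧
    ∀ P : TaggedPart T A, P.IsHenstock → P.IsFine γ → ‖P.sum f μ - J‖ ≤ ε

/-- Norm-McShane (free partition) integrability of `f` on `A` with integral `J`. -/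
def HasNormMIntegralOn (f : T → X) (μ : Measure T) (A : Set T) (J : X) : Prop :=
  ∀ ε : ℝ, 0 < ε → ∃ γ : T → ℝ, IsGage γ ∧
    ∀ P : TaggedPart T A, P.IsFine γ → ‖P.sum f μ - J‖ ≤ ε

end Defs

theorem norm_le_norm_of_abs_le {X : Type*} [NormedAddCommGroup X] [Lattice X] [HasSolidNorm X]
    [IsOrderedAddMonoid X] {x y : X} (h : |x| ≤ y) : ‖x‖ ≤ ‖y‖ :=
  norm_le_norm_of_abs_le_abs (h.trans (le_abs_self y))

theorem order_henstock_implies_norm_henstock_general {T : Type*} [MetricSpace T] [MeasurableSpace T]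
    (μ : Measure T)
    {X : Type*} [NormedAddCommGroup X] [Lattice X] [HasSolidNorm X] [IsOrderedAddMonoid X] [NormedSpace ℝ X]
    (hOC : ∀ b : ℕ → X, IsOSeq b → Tendsto (fun n => ‖b n‖) atTop (nhds 0))
    (f : T → X) (J : X) (hf : HasOHIntegralOn f μ Set.univ J) :
    HasNormHIntegralOn f μ Set.univ J := by
  obtain ⟨b, hb, γ, hγ, hest⟩ := hf
  intro ε hε
  obtain ⟨n, hn⟩ := ((hOC b hb).eventually (eventually_le_nhds hε)).exists
  exact ⟨γ n, hγ n, fun P hH hF => (norm_le_norm_of_abs_le (hest n P hH hF)).trans hn⟩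

theorem order_henstock_implies_norm_henstock {T : Type*} [MetricSpace T] [CompactSpace T] [MeasurableSpace T] [BorelSpace T]
    (μ : Measure T) [IsFiniteMeasure μ] [μ.Regular]
    {X : Type*} [NormedAddCommGroup X] [Lattice X] [HasSolidNorm X] [IsOrderedAddMonoid X] [NormedSpace ℝ X] [CompleteSpace X]
    (hOC : ∀ b : ℕ → X, IsOSeq b → Tendsto (fun n => ‖b n‖) atTop (nhds 0))
    (f : T → X) (J : X) (hf : HasOHIntegralOn f μ Set.univ J) :
    HasNormHIntegralOn f μ Set.univ J :=
  order_henstock_implies_norm_henstock_general μ hOC f J hf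
end

section
/- Let T be a compact metric space with a regular σ-additive Borel measure μ and X a Banach lattice. Let f, g: T → X be order-bounded maps (|f| ≤ M and |g| ≤ M for some M ∈ X) with f = g μ-almost everywhere. Then f is order-Henstock integrable if and only if g is, and in that case their integrals coincide. -/
open MeasureTheory Set Filter

/-!
Modifying `f` on a null set `N` only changes Riemann sums through the cells whose tags lie in `N`.
By outer regularity `N` sits inside open sets `Uₙ` with `μ Uₙ < 1/(n+1)`; shrinking the gages so
that every cell tagged in `Uₙ` stays inside `Uₙ`, those cells have total measure below `1/(n+1)`,
so for a bound `|g - f| ≤ K` the Riemann sums of `f` and `g` differ by at most `(1/(n+1)) • K`.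
Adding this (o)-sequence to the one regulating `f` regulates `g`.
-/

lemma abs_sub_le_abs_add_abs {X : Type*} [AddCommGroup X] [Lattice X] [IsOrderedAddMonoid X]
    (a b : X) : |a - b| ≤ |a| + |b| := by
  simpa only [sub_eq_add_neg, abs_neg] using abs_add_le a (-b)

section OrderedModule

variable {X : Type*} [AddCommGroup X] [Lattice X] [IsOrderedAddMonoid X] [Module ℝ X]

lemma inv_two_pow_smul_nonneg {x : X} (hx : 0 ≤ x) (k : ℕ) : 0 ≤ ((2 : ℝ) ^ k)⁻¹ • x := by
  induction k with
  | zero => simpa using hx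
  | succ k ih =>
    refine nsmul_two_semiclosed ?_
    rw [two_nsmul, ← add_smul]
    convert ih using 2
    ring

lemma abs_sum_smul_le [PosSMulMono ℝ X] {ι : Type*} (s : Finset ι) {c : ι → ℝ} {v : ι → X}
    {K : X} (hc : ∀ i ∈ s, 0 ≤ c i) (hv : ∀ i ∈ s, |v i| ≤ K) :
    |∑ i ∈ s, c i • v i| ≤ (∑ i ∈ s, c i) • K := by
  rw [Finset.sum_smul, abs_le']
  constructor
  · exact Finset.sum_le_sum fun i hi =>
      smul_le_smul_of_nonneg_left ((le_abs_self _).trans (hv i hi)) (hc i hi)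
  · rw [← Finset.sum_neg_distrib]
    refine Finset.sum_le_sum fun i hi => ?_
    rw [← smul_neg]
    exact smul_le_smul_of_nonneg_left ((neg_le_abs _).trans (hv i hi)) (hc i hi)

end OrderedModule

section SolidNorm

variable {X : Type*} [NormedAddCommGroup X] [Lattice X] [IsOrderedAddMonoid X] [HasSolidNorm X]
  [NormedSpace ℝ X]

/-- Dyadic scalars preserve the positive cone since lattice-ordered groups are 2-unperforated,
and the cone is closed. -/
lemma HasSolidNorm.smul_nonneg {c : ℝ} (hc : 0 ≤ c) {x : X} (hx : 0 ≤ x) : 0 ≤ c • x := by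
  have hdyadic : ∀ k : ℕ, 0 ≤ ((⌊c * 2 ^ k⌋₊ : ℝ) / 2 ^ k) • x := fun k => by
    rw [div_eq_mul_inv, mul_smul, Nat.cast_smul_eq_nsmul]
    exact nsmul_nonneg (inv_two_pow_smul_nonneg hx k) _
  have hlim : Tendsto (fun k : ℕ => (⌊c * 2 ^ k⌋₊ : ℝ) / 2 ^ k) atTop (nhds c) :=
    (tendsto_nat_floor_mul_div_atTop hc).comp
      (tendsto_pow_atTop_atTop_of_one_lt one_lt_two)
  exact ge_of_tendsto' (hlim.smul_const (M := ℝ) x) hdyadic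

instance HasSolidNorm.posSMulMono : PosSMulMono ℝ X :=
  PosSMulMono.of_smul_nonneg fun _ hc _ hx => HasSolidNorm.smul_nonneg hc hx

instance HasSolidNorm.smulPosMono : SMulPosMono ℝ X :=
  SMulPosMono.of_pos fun _ hx _ _ hab => sub_nonneg.1 <| by
    rw [← sub_smul]; exact HasSolidNorm.smul_nonneg (sub_nonneg.2 hab) hx.le

lemma isOSeq_one_div_succ_smul {K : X} (hK : 0 ≤ K) :
    IsOSeq fun n : ℕ => (1 / (n + 1 : ℝ)) • K := by
  have hanti : Antitone fun n : ℕ => (1 / (n + 1 : ℝ)) • K := fun m n h =>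
    smul_le_smul_of_nonneg_right (one_div_le_one_div_of_le (by positivity) (by gcongr)) hK
  have hlim : Tendsto (fun n : ℕ => (1 / (n + 1 : ℝ)) • K) atTop (nhds 0) := by
    simpa using (tendsto_one_div_add_atTop_nhds_zero_nat (𝕜 := ℝ)).smul_const K
  exact ⟨hanti, isGLB_of_tendsto_atTop hanti hlim⟩

end SolidNorm

lemma IsOSeq.add {X : Type*} [Lattice X] [AddCommGroup X] [IsOrderedAddMonoid X] {b c : ℕ → X}
    (hb : IsOSeq b) (hc : IsOSeq c) : IsOSeq (b + c) := by
  refine ⟨hb.1.add hc.1, ?_, fun ℓ hℓ => ?_⟩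
  · rintro _ ⟨n, rfl⟩
    exact add_nonneg (hb.2.1 ⟨n, rfl⟩) (hc.2.1 ⟨n, rfl⟩)
  · have hle_c : ∀ n, ℓ ≤ c n := fun n => by
      refine sub_nonpos.1 (hb.2.2 ?_)
      rintro _ ⟨m, rfl⟩
      rw [sub_le_iff_le_add]
      exact (hℓ ⟨max m n, rfl⟩).trans
        (add_le_add (hb.1 (le_max_left m n)) (hc.1 (le_max_right m n)))
    exact hc.2.2 (by rintro _ ⟨n, rfl⟩; exact hle_c n)

lemma exists_gage_ball_subset {T : Type*} [PseudoMetricSpace T] {U : Set T} (hU : IsOpen U) :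
    ∃ r : T → ℝ, IsGage r ∧ ∀ t ∈ U, Metric.ball t (r t) ⊆ U := by
  classical
  choose ε hε hball using fun t (ht : t ∈ U) => Metric.isOpen_iff.1 hU t ht
  refine ⟨fun t => if ht : t ∈ U then ε t ht else 1, fun t => ?_, fun t ht => ?_⟩
  · dsimp only
    split_ifs with ht
    exacts [hε t ht, one_pos]
  · simpa only [dif_pos ht] using hball t ht

namespace TaggedPart

variable {T : Type*} [MeasurableSpace T] {A : Set T}

lemma IsFine.mono [PseudoMetricSpace T] {γ γ' : T → ℝ} {P : TaggedPart T A} (hP : P.IsFine γ)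
    (hγ : ∀ t, γ t ≤ γ' t) : P.IsFine γ' :=
  fun i w hw => (hP i w hw).trans_le (hγ _)

lemma IsFine.subset_ball [PseudoMetricSpace T] {γ : T → ℝ} {P : TaggedPart T A}
    (hP : P.IsFine γ) (i : Fin P.k) : P.E i ⊆ Metric.ball (P.tag i) (γ (P.tag i)) :=
  fun w hw => hP i w hw

lemma sum_sub {X : Type*} [AddCommGroup X] [Module ℝ X] (P : TaggedPart T A) (f g : T → X)
    (μ : Measure T) : P.sum (f - g) μ = P.sum f μ - P.sum g μ := by
  simp only [sum, Pi.sub_apply, smul_sub, Finset.sum_sub_distrib]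

lemma sum_toReal_measure_le (P : TaggedPart T A) (μ : Measure T) {s : Finset (Fin P.k)}
    {U : Set T} (hsU : ∀ i ∈ s, P.E i ⊆ U) (hU : μ U ≠ ⊤) :
    ∑ i ∈ s, (μ (P.E i)).toReal ≤ (μ U).toReal := by
  rw [← ENNReal.toReal_sum fun i hi => ne_top_of_le_ne_top hU (measure_mono (hsU i hi)),
    ← measure_biUnion_finset (fun i _ j _ hij => P.disj i j hij) fun i _ => P.meas i]
  exact ENNReal.toReal_mono hU (measure_mono (iUnion₂_subset hsU))

lemma abs_sum_le_of_subset {X : Type*} [AddCommGroup X] [Lattice X] [IsOrderedAddMonoid X]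
    [Module ℝ X] [PosSMulMono ℝ X] [SMulPosMono ℝ X] (P : TaggedPart T A) (μ : Measure T)
    {h : T → X} {K : X} {U : Set T} (hK0 : 0 ≤ K) (hK : ∀ t, |h t| ≤ K)
    (hU : ∀ i, h (P.tag i) ≠ 0 → P.E i ⊆ U) (hμU : μ U ≠ ⊤) :
    |P.sum h μ| ≤ (μ U).toReal • K := by
  classical
  set s := Finset.univ.filter fun i => h (P.tag i) ≠ 0
  have hs : P.sum h μ = ∑ i ∈ s, (μ (P.E i)).toReal • h (P.tag i) :=
    (Finset.sum_filter_of_ne fun _ _ hi => right_ne_zero_of_smul hi).symm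
  rw [hs]
  calc _ ≤ (∑ i ∈ s, (μ (P.E i)).toReal) • K :=
        abs_sum_smul_le s (fun _ _ => ENNReal.toReal_nonneg) fun _ _ => hK _
    _ ≤ (μ U).toReal • K := smul_le_smul_of_nonneg_right
        (P.sum_toReal_measure_le μ (fun i hi => hU i (Finset.mem_filter.1 hi).2) hμU) hK0

end TaggedPart

theorem HasOHIntegralOn.congr_ae_of_abs_sub_le {T : Type*} [PseudoMetricSpace T]
    [MeasurableSpace T] {μ : Measure T} [μ.OuterRegular] {X : Type*} [NormedAddCommGroup X]
    [Lattice X] [IsOrderedAddMonoid X] [HasSolidNorm X] [NormedSpace ℝ X] {f g : T → X}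
    {A : Set T} {J K : X} (hf : HasOHIntegralOn f μ A J) (hfg : f =ᵐ[μ] g) (hK0 : 0 ≤ K)
    (hK : ∀ t, |g t - f t| ≤ K) : HasOHIntegralOn g μ A J := by
  obtain ⟨b, hb, γ, hγ, hfJ⟩ := hf
  have hnull : μ {t | f t ≠ g t} = 0 := hfg
  choose U hfgU hUo hμU using fun n : ℕ =>
    Set.exists_isOpen_lt_of_lt {t | f t ≠ g t} (ENNReal.ofReal (1 / (n + 1)))
      (by rw [hnull]; exact ENNReal.ofReal_pos.2 (by positivity))
  choose r hr hrU using fun n => exists_gage_ball_subset (hUo n)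
  refine ⟨(fun n : ℕ => (1 / (n + 1 : ℝ)) • K) + b, (isOSeq_one_div_succ_smul hK0).add hb,
    fun n => min (γ n) (r n), fun n t => lt_min (hγ n t) (hr n t), fun n P hH hP => ?_⟩
  have hgf : |P.sum g μ - P.sum f μ| ≤ (1 / (n + 1 : ℝ)) • K := by
    rw [← P.sum_sub]
    refine (P.abs_sum_le_of_subset μ hK0 (fun t => hK t) (fun i hi => ?_) (hμU n).ne_top).trans ?_
    · have htag : P.tag i ∈ U n := hfgU n fun h => hi (sub_eq_zero.2 h.symm)
      exact (hP.subset_ball i).trans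
        ((Metric.ball_subset_ball (min_le_right _ _)).trans (hrU n _ htag))
    · exact smul_le_smul_of_nonneg_right
        (ENNReal.toReal_le_of_le_ofReal (by positivity) (hμU n).le) hK0
  calc |P.sum g μ - J| = |(P.sum g μ - P.sum f μ) + (P.sum f μ - J)| := by
        rw [sub_add_sub_cancel]
    _ ≤ |P.sum g μ - P.sum f μ| + |P.sum f μ - J| := abs_add_le _ _
    _ ≤ (1 / (n + 1 : ℝ)) • K + b n :=
        add_le_add hgf (hfJ n P hH (hP.mono fun _ => min_le_left _ _))

theorem oH_integrable_ae_eq_of_order_bounded_general {T : Type*} [MetricSpace T] [MeasurableSpace T]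
    (μ : Measure T) [μ.Regular]
    {X : Type*} [NormedAddCommGroup X] [Lattice X] [IsOrderedAddMonoid X] [HasSolidNorm X] [NormedSpace ℝ X]
    (f g : T → X) (M : X) (hfM : ∀ t, |f t| ≤ M) (hgM : ∀ t, |g t| ≤ M)
    (hae : f =ᵐ[μ] g) (J : X) :
    HasOHIntegralOn f μ Set.univ J ↔ HasOHIntegralOn g μ Set.univ J := by
  have hK0 : 0 ≤ |M| + |M| := add_nonneg (abs_nonneg M) (abs_nonneg M)
  have hK : ∀ t, |g t - f t| ≤ |M| + |M| := fun t => (abs_sub_le_abs_add_abs _ _).trans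
    (add_le_add ((hgM t).trans (le_abs_self M)) ((hfM t).trans (le_abs_self M)))
  exact ⟨fun hf => hf.congr_ae_of_abs_sub_le hae hK0 hK,
    fun hg => hg.congr_ae_of_abs_sub_le hae.symm hK0 fun t => abs_sub_comm (g t) (f t) ▸ hK t⟩

theorem oH_integrable_ae_eq_of_order_bounded {T : Type*} [MetricSpace T] [CompactSpace T] [MeasurableSpace T] [BorelSpace T]
    (μ : Measure T) [IsFiniteMeasure μ] [μ.Regular]
    {X : Type*} [NormedAddCommGroup X] [Lattice X] [IsOrderedAddMonoid X] [HasSolidNorm X] [NormedSpace ℝ X] [CompleteSpace X] [NullSingletonClass μ]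
    (f g : T → X) (M : X) (hfM : ∀ t, |f t| ≤ M) (hgM : ∀ t, |g t| ≤ M)
    (hae : f =ᵐ[μ] g) (J : X) :
    HasOHIntegralOn f μ Set.univ J ↔ HasOHIntegralOn g μ Set.univ J :=
  oH_integrable_ae_eq_of_order_bounded_general μ f g M hfM hgM hae J
end

section
/- (Henstock Lemma for the order integral.) Let f: T → X be order-Henstock integrable. Then there exist an (o)-sequence (b_n) and gages (γ_n) such that for every n and every γ_n-fine Henstock partition Π of T, one has Σ_{E∈Π} Ob_n(f,E) ≤ b_n, where Ob_n(f,E) is the supremum of |σ(f,Π″_E) − σ(f,Π′_E)| over all pairs of γ_n-fine Henstock partitions Π′_E, Π″_E of E. -/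
open MeasureTheory Set Filter

/-!
Fix a sign for each piece of `P`. Gluing `P''` on the pieces with sign `+` and `P'` on the others,
and vice versa, gives two `γₙ`-fine Henstock partitions of `T`; their Riemann sums are both within
`bₙ` of `J`, so each signed sum `∑ ±(σ(f, P''ᵢ) - σ(f, P'ᵢ))` is at most `2bₙ`. As `|x| = x ⊔ -x`
and addition distributes over `⊔`, the sum of the absolute values is the supremum of these signed
sums.
-/

namespace TaggedPart

variable {T : Type*} [MeasurableSpace T] {A : Set T}

lemma E_subset (P : TaggedPart T A) (i : Fin P.k) : P.E i ⊆ A :=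
  (subset_iUnion P.E i).trans P.cover.subset

noncomputable def biUnion (P : TaggedPart T A) (Q : ∀ i, TaggedPart T (P.E i)) :
    TaggedPart T A where
  k := Fintype.card (Σ i, Fin (Q i).k)
  E j := (Q ((Fintype.equivFin _).symm j).1).E ((Fintype.equivFin _).symm j).2
  tag j := (Q ((Fintype.equivFin _).symm j).1).tag ((Fintype.equivFin _).symm j).2
  meas _ := (Q _).meas _
  disj := by
    have key : ∀ p p' : Σ i, Fin (Q i).k, p ≠ p' → Disjoint ((Q p.1).E p.2) ((Q p'.1).E p'.2) := by
      rintro ⟨i, a⟩ ⟨i', a'⟩ hne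
      rcases eq_or_ne i i' with rfl | hii'
      · exact (Q i).disj a a' fun h => hne (h ▸ rfl)
      · exact (P.disj i i' hii').mono ((Q i).E_subset a) ((Q i').E_subset a')
    exact fun j j' hjj' => key _ _ fun h => hjj' ((Fintype.equivFin _).symm.injective h)
  cover := by
    refine Subset.antisymm (iUnion_subset fun j => ((Q _).E_subset _).trans (P.E_subset _)) ?_
    intro x hx
    rw [← P.cover] at hx
    obtain ⟨i, hi⟩ := mem_iUnion.1 hx
    rw [← (Q i).cover] at hi
    obtain ⟨a, ha⟩ := mem_iUnion.1 hi
    refine mem_iUnion.2 ⟨Fintype.equivFin _ ⟨i, a⟩, ?_⟩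
    change x ∈ (fun p : Σ i, Fin (Q i).k => (Q p.1).E p.2) ((Fintype.equivFin _).symm _)
    rwa [Equiv.symm_apply_apply]

lemma IsHenstock.biUnion {P : TaggedPart T A} {Q : ∀ i, TaggedPart T (P.E i)}
    (hQ : ∀ i, (Q i).IsHenstock) : (P.biUnion Q).IsHenstock :=
  fun _ => hQ _ _

lemma IsFine.biUnion [PseudoMetricSpace T] {γ : T → ℝ} {P : TaggedPart T A}
    {Q : ∀ i, TaggedPart T (P.E i)} (hQ : ∀ i, (Q i).IsFine γ) : (P.biUnion Q).IsFine γ :=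
  fun _ => hQ _ _

lemma sum_biUnion {X : Type*} [AddCommMonoid X] [Module ℝ X] (P : TaggedPart T A)
    (Q : ∀ i, TaggedPart T (P.E i)) (f : T → X) (μ : Measure T) :
    (P.biUnion Q).sum f μ = ∑ i, (Q i).sum f μ := by
  rw [sum, biUnion, Equiv.sum_comp (Fintype.equivFin _).symm
    fun p : Σ i, Fin (Q i).k => (μ ((Q p.1).E p.2)).toReal • f ((Q p.1).tag p.2),
    ← Finset.univ_sigma_univ, Finset.sum_sigma]
  rfl

end TaggedPart

lemma Finset.sum_sup_le_of_forall_choice {X : Type*} [Lattice X] [AddCommGroup X]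
    [IsOrderedAddMonoid X] {ι : Type*} [DecidableEq ι] (s : Finset ι) (y z : ι → X) (c : X)
    (h : ∀ ε : ι → Bool, ∑ i ∈ s, (bif ε i then y i else z i) ≤ c) :
    ∑ i ∈ s, (y i ⊔ z i) ≤ c := by
  induction s using Finset.cons_induction generalizing c with
  | empty => simpa using h fun _ => true
  | cons a s ha ih =>
    have key : ∀ v : Bool, (bif v then y a else z a) + ∑ i ∈ s, (y i ⊔ z i) ≤ c := by
      intro v
      rw [← le_sub_iff_add_le']
      refine ih _ fun ε => le_sub_iff_add_le'.2 ?_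
      have hε := h (Function.update ε a v)
      rwa [Finset.sum_cons, Function.update_self, Finset.sum_congr rfl fun i hi => by
        rw [Function.update_of_ne (ne_of_mem_of_not_mem hi ha)]] at hε
    rw [Finset.sum_cons, sup_add]
    exact sup_le (key true) (key false)

lemma Finset.sum_abs_le_of_forall_signed {X : Type*} [Lattice X] [AddCommGroup X]
    [IsOrderedAddMonoid X] {ι : Type*} [DecidableEq ι] (s : Finset ι) (x : ι → X) (c : X)
    (h : ∀ ε : ι → Bool, ∑ i ∈ s, (bif ε i then x i else -x i) ≤ c) :
    ∑ i ∈ s, |x i| ≤ c :=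
  s.sum_sup_le_of_forall_choice x (fun i => -x i) c h

theorem oH_henstock_lemma_oscillation_general {T : Type*} [MetricSpace T] [MeasurableSpace T]
    (μ : Measure T)
    {X : Type*} [NormedAddCommGroup X] [Lattice X] [HasSolidNorm X] [IsOrderedAddMonoid X] [NormedSpace ℝ X]
    (f : T → X) (J : X)
    (hf : HasOHIntegralOn f μ Set.univ J) :
    ∃ b : ℕ → X, IsOSeq b ∧ ∃ γ : ℕ → T → ℝ, (∀ n, IsGage (γ n)) ∧
      ∀ n (P : TaggedPart T (Set.univ : Set T)), P.IsHenstock → P.IsFine (γ n) →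
        ∀ (P' P'' : ∀ i : Fin P.k, TaggedPart T (P.E i)),
          (∀ i, (P' i).IsHenstock) → (∀ i, (P' i).IsFine (γ n)) →
          (∀ i, (P'' i).IsHenstock) → (∀ i, (P'' i).IsFine (γ n)) →
          ∑ i, |(P'' i).sum f μ - (P' i).sum f μ| ≤ b n := by
  obtain ⟨b, hb, γ, hγ, hint⟩ := hf
  refine ⟨b + b, hb.add hb, γ, hγ, fun n P _ _ P' P'' h'H h'F h''H h''F => ?_⟩
  refine Finset.sum_abs_le_of_forall_signed _ _ _ fun ε => ?_
  set σ : Bool → X := fun v => (P.biUnion fun i => bif ε i == v then P'' i else P' i).sum f μ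
  have hσ : ∀ v, |σ v - J| ≤ b n := fun v =>
    hint n _ (.biUnion fun i => by cases ε i == v <;> simp [h'H, h''H])
      (.biUnion fun i => by cases ε i == v <;> simp [h'F, h''F])
  calc ∑ i, (bif ε i then (P'' i).sum f μ - (P' i).sum f μ
        else -((P'' i).sum f μ - (P' i).sum f μ))
      = σ true - σ false := by
        simp only [σ, TaggedPart.sum_biUnion, ← Finset.sum_sub_distrib]
        exact Finset.sum_congr rfl fun i _ => by cases ε i <;> simp
    _ = (σ true - J) + (J - σ false) := (sub_add_sub_cancel _ _ _).symm
    _ ≤ |σ true - J| + |J - σ false| := (le_abs_self _).trans (abs_add_le _ _)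
    _ ≤ b n + b n := add_le_add (hσ true) (abs_sub_comm (σ false) J ▸ hσ false)

theorem oH_henstock_lemma_oscillation {T : Type*} [MetricSpace T] [CompactSpace T] [MeasurableSpace T] [BorelSpace T]
    (μ : Measure T) [IsFiniteMeasure μ] [μ.Regular]
    {X : Type*} [NormedAddCommGroup X] [Lattice X] [HasSolidNorm X] [IsOrderedAddMonoid X] [NormedSpace ℝ X] [CompleteSpace X]
    (hDC : ∀ s : Set X, s.Nonempty → BddAbove s → ∃ x, IsLUB s x) (f : T → X) (J : X)
    (hf : HasOHIntegralOn f μ Set.univ J) :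
    ∃ b : ℕ → X, IsOSeq b ∧ ∃ γ : ℕ → T → ℝ, (∀ n, IsGage (γ n)) ∧
      ∀ n (P : TaggedPart T (Set.univ : Set T)), P.IsHenstock → P.IsFine (γ n) →
        ∀ (P' P'' : ∀ i : Fin P.k, TaggedPart T (P.E i)),
          (∀ i, (P' i).IsHenstock) → (∀ i, (P' i).IsFine (γ n)) →
          (∀ i, (P'' i).IsHenstock) → (∀ i, (P'' i).IsFine (γ n)) →
          ∑ i, |(P'' i).sum f μ - (P' i).sum f μ| ≤ b n :=
  oH_henstock_lemma_oscillation_general μ f J hf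
end

section
/- Let X be an L-space and f: T → X order-Henstock integrable. Then f is Bochner integrable with respect to μ. -/
open MeasureTheory Set Filter

open Function
open scoped ENNReal

/-!
Fix a gage `γ` whose fine Henstock partitions have Riemann sums within `B` of `J` in order, a
`γ`-fine Henstock partition `P`, and its step function `g`. Let `C x ∋ x` be disjoint `γ`-fine
sets, each inside one piece of `P` and free of its tags. Adding finitely many of them to `P` as new
pieces tagged at `x` changes the Riemann sum by `∑ μ(C x) • (f x - g x)`, so all these partial sums
have modulus at most `2B`, and choosing signs gives `∑ |μ(C x) • (f x - g x)| ≤ 4B`. In an L-space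
the norm is additive on the positive cone, whence `∑ μ(C x) ‖f x - g x‖ ≤ 4‖B‖`.

By Lindelöf's theorem such families cover every set missing the tags. Covering
`{ε ≤ ‖f - g‖}` gives a Chebyshev bound; since the norms of an (o)-sequence tend to `0` in an
L-space, the step functions converge to `f` in measure and `f` is a.e. strongly measurable.
Covering the level sets of a simple minorant of `‖f - g‖` gives `∫⁻ ‖f - g‖ ≤ 4‖B‖`, so
`f = g + (f - g)` is integrable.
-/

section LatticeOrderedGroup

variable {X : Type*} [AddCommGroup X] [Lattice X] [IsOrderedAddMonoid X]

theorem Finset.sum_abs_le_of_forall_subset_sub_le {ι : Type*} [DecidableEq ι] {s : Finset ι}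
    {x : ι → X} {c : X} (h : ∀ t ⊆ s, ∑ i ∈ t, x i - ∑ i ∈ s \ t, x i ≤ c) :
    ∑ i ∈ s, |x i| ≤ c := by
  induction s using Finset.induction_on generalizing c with
  | empty => simpa using h ∅ subset_rfl
  | @insert a s ha ih =>
    have plus : ∑ i ∈ s, |x i| ≤ c - x a := ih fun t ht => by
      have := h (insert a t) (Finset.insert_subset_insert a ht)
      rw [Finset.sum_insert (fun hat => ha (ht hat)), Finset.insert_sdiff_insert,
        Finset.sdiff_insert_of_notMem ha] at this
      rw [le_sub_iff_add_le]
      convert this using 1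
      abel
    have minus : ∑ i ∈ s, |x i| ≤ c + x a := ih fun t ht => by
      have := h t (ht.trans (Finset.subset_insert a s))
      rw [Finset.insert_sdiff_of_notMem s (fun hat => ha (ht hat)), Finset.sum_insert
        (fun has => ha (Finset.mem_sdiff.1 has).1)] at this
      rw [← sub_le_iff_le_add]
      convert this using 1
      abel
    rw [Finset.sum_insert ha, ← le_sub_iff_add_le]
    exact abs_le'.2 ⟨le_sub_comm.1 plus, by
      rw [le_sub_iff_add_le, ← le_sub_iff_add_le', sub_neg_eq_add]; exact minus⟩

theorem Finset.sum_abs_le_two_nsmul_of_forall_subset {ι : Type*} {s : Finset ι} {x : ι → X}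
    {c : X} (h : ∀ t ⊆ s, |∑ i ∈ t, x i| ≤ c) : ∑ i ∈ s, |x i| ≤ 2 • c := by
  classical
  refine Finset.sum_abs_le_of_forall_subset_sub_le fun t ht => ?_
  calc ∑ i ∈ t, x i - ∑ i ∈ s \ t, x i
      ≤ |∑ i ∈ t, x i| + |∑ i ∈ s \ t, x i| := by
        rw [sub_eq_add_neg]; exact add_le_add (le_abs_self _) (neg_le_abs _)
    _ ≤ 2 • c := by rw [two_nsmul]; exact add_le_add (h t ht) (h _ Finset.sdiff_subset)

end LatticeOrderedGroup

section LSpace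

variable {X : Type*} [NormedAddCommGroup X] [Lattice X] [IsOrderedAddMonoid X]
  (hL : ∀ x y : X, 0 ≤ x → 0 ≤ y → ‖x + y‖ = ‖x‖ + ‖y‖)
include hL

theorem norm_sum_of_nonneg {ι : Type*} {s : Finset ι} {x : ι → X} (hx : ∀ i ∈ s, 0 ≤ x i) :
    ‖∑ i ∈ s, x i‖ = ∑ i ∈ s, ‖x i‖ := by
  classical
  induction s using Finset.induction_on with
  | empty => simp
  | @insert a s ha ih =>
    rw [Finset.sum_insert ha, Finset.sum_insert ha,
      hL _ _ (hx a (Finset.mem_insert_self a s)) (Finset.sum_nonneg fun i hi =>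
        hx i (Finset.mem_insert_of_mem hi)), ih fun i hi => hx i (Finset.mem_insert_of_mem hi)]

theorem IsOSeq.tendsto_norm_zero [HasSolidNorm X] [CompleteSpace X] {b : ℕ → X} (hb : IsOSeq b) :
    Tendsto (fun n => ‖b n‖) atTop (nhds 0) := by
  have norm_sub {m n : ℕ} (hmn : m ≤ n) : ‖b m - b n‖ = ‖b m‖ - ‖b n‖ := by
    have := hL _ _ (sub_nonneg.2 (hb.1 hmn)) (hb.2.1 ⟨n, rfl⟩)
    rw [sub_add_cancel] at this
    linarith
  obtain ⟨r, hr⟩ : ∃ r, Tendsto (fun n => ‖b n‖) atTop (nhds r) :=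
    ⟨_, tendsto_atTop_ciInf (fun m n hmn => sub_nonneg.1 (norm_sub hmn ▸ norm_nonneg _))
      ⟨0, by rintro _ ⟨n, rfl⟩; exact norm_nonneg _⟩⟩
  have hcauchy : CauchySeq b := by
    refine Metric.cauchySeq_iff'.2 fun ε hε => ?_
    obtain ⟨N, hN⟩ := Metric.cauchySeq_iff'.1 hr.cauchySeq ε hε
    refine ⟨N, fun n hn => lt_of_le_of_lt ?_ (hN n hn)⟩
    rw [dist_comm, dist_eq_norm, norm_sub hn, Real.dist_eq, abs_sub_comm]
    exact le_abs_self _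
  obtain ⟨x, hx⟩ := cauchySeq_tendsto_of_complete hcauchy
  obtain rfl : x = 0 := (isGLB_of_tendsto_atTop hb.1 hx).unique hb.2
  simpa using hx.norm

end LSpace

section Disjointification

variable {α : Type*} [MeasurableSpace α]

theorem Set.Countable.exists_pairwiseDisjoint_subset_cover {ι : Type*} {c : Set ι}
    (hc : c.Countable) {U : ι → Set α} (hU : ∀ i ∈ c, MeasurableSet (U i)) :
    ∃ D : ι → Set α, (∀ i ∈ c, MeasurableSet (D i)) ∧ c.PairwiseDisjoint D ∧
      (∀ i, D i ⊆ U i) ∧ ⋃ i ∈ c, U i ⊆ ⋃ i ∈ c, D i := by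
  obtain ⟨e, he⟩ := Set.countable_iff_exists_injOn.1 hc
  refine ⟨fun i => U i \ ⋃ j ∈ c, ⋃ (_ : e j < e i), U j, fun i hi => ?_, ?_,
    fun i => sdiff_subset, ?_⟩
  · exact (hU i hi).diff (.biUnion hc fun j hj => .iUnion fun _ => hU j hj)
  · intro i hi j hj hij
    refine Set.disjoint_left.2 fun x ⟨hxi, hxi'⟩ ⟨hxj, hxj'⟩ => ?_
    simp only [mem_iUnion, exists_prop, not_exists, not_and] at hxi' hxj'
    rcases lt_or_gt_of_ne (he.ne hi hj hij) with h | h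
    · exact hxj' i hi h hxi
    · exact hxi' j hj h hxj
  · intro y hy
    obtain ⟨i, hi, hyi⟩ := mem_iUnion₂.1 hy
    obtain ⟨j, ⟨hj, hyj⟩, hmin⟩ :=
      (InvImage.wf e wellFounded_lt).has_min {j | j ∈ c ∧ y ∈ U j} ⟨i, hi, hyi⟩
    refine mem_biUnion hj ⟨hyj, fun hy' => ?_⟩
    obtain ⟨j', hj', hlt, hyj'⟩ := by simpa only [mem_iUnion, exists_prop] using hy'
    exact hmin j' ⟨hj', hyj'⟩ hlt

theorem Set.Countable.exists_pairwiseDisjoint_mem_cover [MeasurableSingletonClass α]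
    {c S : Set α} (hc : c.Countable) (hS : S.Countable) (hcS : Disjoint c S) {U : α → Set α}
    (hU : ∀ x ∈ c, MeasurableSet (U x)) (hxU : ∀ x ∈ c, x ∈ U x) :
    ∃ C : α → Set α, (∀ x ∈ c, MeasurableSet (C x)) ∧ c.PairwiseDisjoint C ∧
      (∀ x ∈ c, x ∈ C x) ∧ (∀ x ∈ c, C x ⊆ U x) ∧ (∀ x ∈ c, Disjoint (C x) S) ∧
      (⋃ x ∈ c, U x) \ S ⊆ ⋃ x ∈ c, C x := by
  obtain ⟨D, hDm, hDdisj, hDU, hcover⟩ := hc.exists_pairwiseDisjoint_subset_cover hU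
  refine ⟨fun x => insert x (D x \ (c ∪ S)), fun x hx => ((hDm x hx).diff
    (hc.union hS).measurableSet).insert x, ?_, fun x _ => mem_insert x _,
    fun x hx => insert_subset (hxU x hx) (sdiff_subset.trans (hDU x)), fun x hx => ?_, ?_⟩
  · intro x hx y hy hxy
    refine Set.disjoint_left.2 fun z hzx hzy => ?_
    rcases hzx with rfl | ⟨hzx, hzx'⟩ <;> rcases hzy with rfl | ⟨hzy, hzy'⟩
    · exact hxy rfl
    · exact hzy' (Or.inl hx)
    · exact hzx' (Or.inl hy)
    · exact (hDdisj hx hy hxy).le_bot ⟨hzx, hzy⟩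
  · refine disjoint_insert_left.2 ⟨Set.disjoint_left.1 hcS hx, ?_⟩
    exact disjoint_sdiff_left.mono_right subset_union_right
  · rintro y ⟨hy, hyS⟩
    by_cases hyc : y ∈ c
    · exact mem_biUnion hyc (mem_insert y _)
    · obtain ⟨x, hx, hyx⟩ := mem_iUnion₂.1 (hcover hy)
      exact mem_biUnion hx (Or.inr ⟨hyx, fun h => h.elim hyc hyS⟩)

end Disjointification

section FineTaggedFamily

variable {T : Type*} [PseudoMetricSpace T] [MeasurableSpace T]

structure IsFineTaggedFamily (γ : T → ℝ) (c : Set T) (C : T → Set T) : Prop where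
  measurableSet : ∀ x ∈ c, MeasurableSet (C x)
  pairwiseDisjoint : c.PairwiseDisjoint C
  mem : ∀ x ∈ c, x ∈ C x
  subset_ball : ∀ x ∈ c, C x ⊆ Metric.ball x (γ x)

theorem exists_isFineTaggedFamily_cover [SecondCountableTopology T] [OpensMeasurableSpace T]
    [MeasurableSingletonClass T] {γ : T → ℝ} (hγ : IsGage γ) {κ : Type*} {ρ : T → κ}
    (hρ : (range ρ).Countable) (hρm : ∀ j, MeasurableSet (ρ ⁻¹' {j})) {W S : Set T}
    (hS : S.Countable) (hWS : Disjoint W S) :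
    ∃ c ⊆ W, c.Countable ∧ ∃ C : T → Set T, IsFineTaggedFamily γ c C ∧
      (∀ x ∈ c, C x ⊆ ρ ⁻¹' {ρ x}) ∧ (∀ x ∈ c, Disjoint (C x) S) ∧ W ⊆ ⋃ x ∈ c, C x := by
  have lindelof (j : κ) : ∃ t ⊆ W ∩ ρ ⁻¹' {j}, t.Countable ∧
      W ∩ ρ ⁻¹' {j} ⊆ ⋃ x ∈ t, Metric.ball x (γ x) :=
    TopologicalSpace.countable_cover_nhdsWithin fun x _ =>
      mem_nhdsWithin_of_mem_nhds (Metric.ball_mem_nhds x (hγ x))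
  choose t htW htc htcover using lindelof
  have hcW : ⋃ j ∈ range ρ, t j ⊆ W := iUnion₂_subset fun j _ => (htW j).trans inter_subset_left
  have hc : (⋃ j ∈ range ρ, t j).Countable := hρ.biUnion fun j _ => htc j
  obtain ⟨C, hCm, hCdisj, hxC, hCU, hCS, hcover⟩ := hc.exists_pairwiseDisjoint_mem_cover hS
    (hWS.mono_left hcW) (U := fun x => Metric.ball x (γ x) ∩ ρ ⁻¹' {ρ x})
    (fun x _ => Metric.isOpen_ball.measurableSet.inter (hρm _))
    (fun x _ => ⟨Metric.mem_ball_self (hγ x), rfl⟩)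
  refine ⟨_, hcW, hc, C, ⟨hCm, hCdisj, hxC, fun x hx => (hCU x hx).trans inter_subset_left⟩,
    fun x hx => (hCU x hx).trans inter_subset_right, hCS,
    fun y hy => hcover ⟨?_, disjoint_left.1 hWS hy⟩⟩
  obtain ⟨x, hx, hyx⟩ := mem_iUnion₂.1 (htcover (ρ y) ⟨hy, rfl⟩)
  exact mem_biUnion (mem_biUnion (mem_range_self y) hx) ⟨hyx, ((htW _ hx).2 : ρ x = ρ y).symm⟩

end FineTaggedFamily

namespace TaggedPart

section Basic

variable {T : Type*} [MeasurableSpace T] {A : Set T}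

noncomputable def ofFintype {ι : Type*} [Fintype ι] (E : ι → Set T) (tag : ι → T)
    (meas : ∀ i, MeasurableSet (E i)) (disj : Pairwise (Disjoint on E)) (cover : (⋃ i, E i) = A) :
    TaggedPart T A where
  k := Fintype.card ι
  E := E ∘ (Fintype.equivFin ι).symm
  tag := tag ∘ (Fintype.equivFin ι).symm
  meas _ := meas _
  disj _ _ hij := disj fun h => hij ((Fintype.equivFin ι).symm.injective h)
  cover := cover ▸ (Fintype.equivFin ι).symm.surjective.iUnion_comp E

section ofFintype

variable {ι : Type*} [Fintype ι] {E : ι → Set T} {tag : ι → T} {meas : ∀ i, MeasurableSet (E i)}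
  {disj : Pairwise (Disjoint on E)} {cover : (⋃ i, E i) = A}

theorem sum_ofFintype {X : Type*} [AddCommMonoid X] [Module ℝ X] (f : T → X) (μ : Measure T) :
    (ofFintype E tag meas disj cover).sum f μ = ∑ i, μ.real (E i) • f (tag i) :=
  Fintype.sum_equiv (Fintype.equivFin ι).symm _ _ fun _ => rfl

theorem isHenstock_ofFintype (h : ∀ i, tag i ∈ E i) :
    (ofFintype E tag meas disj cover).IsHenstock := fun _ => h _

theorem isFine_ofFintype [PseudoMetricSpace T] {γ : T → ℝ}
    (h : ∀ i, E i ⊆ Metric.ball (tag i) (γ (tag i))) :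
    (ofFintype E tag meas disj cover).IsFine γ := fun _ => h _

end ofFintype

variable (P : TaggedPart T univ)

noncomputable def index (x : T) : Fin P.k :=
  (mem_iUnion.1 (P.cover.symm ▸ mem_univ x : x ∈ ⋃ i, P.E i)).choose

theorem mem_E_index (x : T) : x ∈ P.E (P.index x) :=
  (mem_iUnion.1 (P.cover.symm ▸ mem_univ x : x ∈ ⋃ i, P.E i)).choose_spec

theorem index_eq_iff {x : T} {i : Fin P.k} : P.index x = i ↔ x ∈ P.E i :=
  ⟨fun h => h ▸ P.mem_E_index x, fun hx => by_contra fun h =>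
    (P.disj _ _ h).le_bot ⟨P.mem_E_index x, hx⟩⟩

theorem measurable_index : Measurable P.index :=
  measurable_to_countable' fun i => by
    simpa only [preimage, mem_singleton_iff, index_eq_iff, ofPred_mem_eq] using P.meas i

theorem index_tag (hP : P.IsHenstock) (i : Fin P.k) : P.index (P.tag i) = i :=
  P.index_eq_iff.2 (hP i)

noncomputable def stepFun {X : Type*} (f : T → X) (x : T) : X := f (P.tag (P.index x))

theorem stepFun_tag (hP : P.IsHenstock) {X : Type*} (f : T → X) (i : Fin P.k) :
    P.stepFun f (P.tag i) = f (P.tag i) := by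
  rw [stepFun, P.index_tag hP]

theorem integrable_stepFun {X : Type*} [NormedAddCommGroup X] (f : T → X) (μ : Measure T)
    [IsFiniteMeasure μ] : Integrable (P.stepFun f) μ :=
  .of_bound ((StronglyMeasurable.of_discrete (f := fun i => f (P.tag i))).comp_measurable
      P.measurable_index).aestronglyMeasurable
    (∑ i, ‖f (P.tag i)‖) (.of_forall fun x =>
      Finset.single_le_sum (f := fun i => ‖f (P.tag i)‖) (fun _ _ => norm_nonneg _)
        (Finset.mem_univ (P.index x)))

end Basic

section Cousin

variable {T : Type*} [PseudoMetricSpace T] [CompactSpace T] [MeasurableSpace T]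
  [OpensMeasurableSpace T] [MeasurableSingletonClass T]

theorem exists_isHenstock_isFine {γ : T → ℝ} (hγ : IsGage γ) :
    ∃ P : TaggedPart T univ, P.IsHenstock ∧ P.IsFine γ := by
  obtain ⟨t, ht⟩ := isCompact_univ.elim_finite_subcover (fun x => Metric.ball x (γ x))
    (fun _ => Metric.isOpen_ball) fun x _ => mem_iUnion.2 ⟨x, Metric.mem_ball_self (hγ x)⟩
  obtain ⟨C, hCm, hCdisj, hxC, hCU, -, hcover⟩ :=
    t.countable_toSet.exists_pairwiseDisjoint_mem_cover countable_empty (disjoint_empty _)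
      (fun x _ => Metric.isOpen_ball.measurableSet) fun x _ => Metric.mem_ball_self (hγ x)
  refine ⟨ofFintype (ι := t) (fun x => C x) (↑) (fun x => hCm x x.2)
    (fun x y hxy => hCdisj x.2 y.2 (Subtype.coe_injective.ne hxy)) ?_,
    isHenstock_ofFintype fun x => hxC x x.2, isFine_ofFintype fun x => hCU x x.2⟩
  refine eq_univ_of_univ_subset fun y _ => ?_
  obtain ⟨x, hx, hyx⟩ := mem_iUnion₂.1 (hcover ⟨ht (mem_univ y), notMem_empty y⟩)
  exact mem_iUnion.2 ⟨⟨x, hx⟩, hyx⟩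

end Cousin

section Refinement

variable {T : Type*} [MeasurableSpace T] {μ : Measure T} {X : Type*} [AddCommGroup X] [Module ℝ X]
  {P : TaggedPart T univ}

theorem sum_measureReal_inter_smul_of_subset (f : T → X) {A : Set T} {i : Fin P.k}
    (hA : A ⊆ P.E i) : ∑ j, μ.real (P.E j ∩ A) • f (P.tag j) = μ.real A • f (P.tag i) := by
  rw [Finset.sum_eq_single i (fun j _ hji => ?_) (by simp), inter_eq_right.2 hA]
  rw [((P.disj j i hji).mono_right hA).inter_eq, measureReal_empty, zero_smul]

variable [PseudoMetricSpace T] [IsFiniteMeasure μ] {γ : T → ℝ} {c : Set T} {C : T → Set T}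

theorem exists_isHenstock_isFine_sum_sub_eq (hP : P.IsHenstock) (hPγ : P.IsFine γ)
    (hC : IsFineTaggedFamily γ c C) (hCP : ∀ x ∈ c, C x ⊆ P.E (P.index x))
    (hCtag : ∀ x ∈ c, Disjoint (C x) (range P.tag)) (f : T → X) {F : Finset T} (hF : ↑F ⊆ c) :
    ∃ Q : TaggedPart T univ, Q.IsHenstock ∧ Q.IsFine γ ∧
      Q.sum f μ - P.sum f μ = ∑ x ∈ F, μ.real (C x) • (f x - P.stepFun f x) := by
  set U := ⋃ x ∈ F, C x
  have hU : MeasurableSet U := F.measurableSet_biUnion fun x hx => hC.measurableSet x (hF hx)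
  have hFdisj : (F : Set T).PairwiseDisjoint C := hC.pairwiseDisjoint.subset hF
  have htagU (i : Fin P.k) : P.tag i ∉ U := fun h => by
    obtain ⟨x, hx, hix⟩ := mem_iUnion₂.1 h
    exact disjoint_right.1 (hCtag x (hF hx)) (mem_range_self i) hix
  let E : Fin P.k ⊕ F → Set T := Sum.elim (fun i => P.E i \ U) fun x => C x
  have hEm (j) : MeasurableSet (E j) := j.rec (fun i => (P.meas i).diff hU)
    fun x => hC.measurableSet x (hF x.2)
  have hEdisj : Pairwise (Disjoint on E) := by
    rintro (i | x) (j | y) hne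
    · exact (P.disj i j fun h => hne (h ▸ rfl)).mono sdiff_subset sdiff_subset
    · exact disjoint_sdiff_left.mono_right (subset_biUnion_of_mem (u := C) y.2)
    · exact disjoint_sdiff_right.mono_left (subset_biUnion_of_mem (u := C) x.2)
    · exact hFdisj x.2 y.2 fun h => hne (congrArg Sum.inr (Subtype.ext h))
  have hEcover : (⋃ j, E j) = univ := by
    refine eq_univ_of_forall fun y => ?_
    by_cases hy : y ∈ U
    · obtain ⟨x, hx, hyx⟩ := mem_iUnion₂.1 hy
      exact mem_iUnion.2 ⟨.inr ⟨x, hx⟩, hyx⟩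
    · exact mem_iUnion.2 ⟨.inl (P.index y), P.mem_E_index y, hy⟩
  refine ⟨ofFintype E (Sum.elim P.tag (↑)) hEm hEdisj hEcover,
    isHenstock_ofFintype ?_, isFine_ofFintype ?_, ?_⟩
  · rintro (i | x)
    exacts [⟨hP i, htagU i⟩, hC.mem x (hF x.2)]
  · rintro (i | x)
    exacts [sdiff_subset.trans fun y hy => hPγ i y hy, hC.subset_ball x (hF x.2)]
  have hinter (i : Fin P.k) : μ.real (P.E i ∩ U) = ∑ x ∈ F, μ.real (P.E i ∩ C x) := by
    rw [inter_iUnion₂, measureReal_biUnion_finset (hFdisj.mono fun _ => inter_subset_right)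
      fun x hx => (P.meas i).inter (hC.measurableSet x (hF hx))]
  have hPsum : P.sum f μ = ∑ i, μ.real (P.E i \ U) • f (P.tag i)
      + ∑ x ∈ F, μ.real (C x) • P.stepFun f x := by
    have hsplit (i : Fin P.k) : μ.real (P.E i)
        = μ.real (P.E i \ U) + ∑ x ∈ F, μ.real (P.E i ∩ C x) := by
      rw [← hinter, measureReal_sdiff_add_inter hU]
    simp_rw [TaggedPart.sum, ← measureReal_def, hsplit, add_smul, Finset.sum_add_distrib,
      Finset.sum_smul]
    rw [Finset.sum_comm]
    congr 1
    refine Finset.sum_congr rfl fun x hx => ?_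
    exact sum_measureReal_inter_smul_of_subset f (hCP x (hF hx))
  rw [sum_ofFintype, Fintype.sum_sum_type, hPsum]
  simp only [Sum.elim_inl, Sum.elim_inr, E, smul_sub, Finset.sum_sub_distrib]
  rw [Finset.sum_coe_sort F (fun x => μ.real (C x) • f x)]
  abel

end Refinement

section Estimates

variable {T : Type*} [PseudoMetricSpace T] [MeasurableSpace T] {μ : Measure T} [IsFiniteMeasure μ]
  {X : Type*} [NormedAddCommGroup X] [Lattice X] [IsOrderedAddMonoid X] [NormedSpace ℝ X]
  {f : T → X} {J B : X} {γ : T → ℝ} {P : TaggedPart T univ} {c : Set T} {C : T → Set T}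

theorem sum_abs_measureReal_smul_le
    (hB : ∀ Q : TaggedPart T univ, Q.IsHenstock → Q.IsFine γ → |Q.sum f μ - J| ≤ B)
    (hP : P.IsHenstock) (hPγ : P.IsFine γ) (hC : IsFineTaggedFamily γ c C)
    (hCP : ∀ x ∈ c, C x ⊆ P.E (P.index x)) (hCtag : ∀ x ∈ c, Disjoint (C x) (range P.tag))
    {F : Finset T} (hF : ↑F ⊆ c) :
    ∑ x ∈ F, |μ.real (C x) • (f x - P.stepFun f x)| ≤ 4 • B := by
  rw [show 4 = 2 * 2 from rfl, mul_nsmul]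
  refine Finset.sum_abs_le_two_nsmul_of_forall_subset fun t ht => ?_
  obtain ⟨Q, hQ, hQγ, hsum⟩ := exists_isHenstock_isFine_sum_sub_eq (μ := μ) hP hPγ hC hCP hCtag f
    ((Finset.coe_subset.2 ht).trans hF)
  calc |∑ x ∈ t, μ.real (C x) • (f x - P.stepFun f x)|
      = |(Q.sum f μ - J) - (P.sum f μ - J)| := by rw [← hsum, sub_sub_sub_cancel_right]
    _ ≤ |Q.sum f μ - J| + |P.sum f μ - J| := by
        rw [sub_eq_add_neg, ← abs_neg (P.sum f μ - J)]; exact abs_add_le _ _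
    _ ≤ 2 • B := by rw [two_nsmul]; exact add_le_add (hB Q hQ hQγ) (hB P hP hPγ)

variable [HasSolidNorm X]

theorem tsum_enorm_sub_stepFun_mul_le (hL : ∀ x y : X, 0 ≤ x → 0 ≤ y → ‖x + y‖ = ‖x‖ + ‖y‖)
    (hB : ∀ Q : TaggedPart T univ, Q.IsHenstock → Q.IsFine γ → |Q.sum f μ - J| ≤ B)
    (hP : P.IsHenstock) (hPγ : P.IsFine γ) (hC : IsFineTaggedFamily γ c C)
    (hCP : ∀ x ∈ c, C x ⊆ P.E (P.index x)) (hCtag : ∀ x ∈ c, Disjoint (C x) (range P.tag)) :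
    ∑' x : c, ‖f x - P.stepFun f x‖ₑ * μ (C x) ≤ ENNReal.ofReal (4 * ‖B‖) := by
  have hB0 : 0 ≤ B := (abs_nonneg _).trans (hB P hP hPγ)
  rw [ENNReal.tsum_eq_iSup_sum]
  refine iSup_le fun F => ?_
  set w : T → X := fun x => |μ.real (C x) • (f x - P.stepFun f x)|
  have hF : ↑(F.map (Embedding.subtype (· ∈ c))) ⊆ c := by simp
  calc ∑ x ∈ F, ‖f x - P.stepFun f x‖ₑ * μ (C x)
      = ∑ x ∈ F.map (Embedding.subtype (· ∈ c)), ENNReal.ofReal ‖w x‖ := by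
        rw [Finset.sum_map]
        refine Finset.sum_congr rfl fun x _ => ?_
        rw [Embedding.coe_subtype, norm_abs_eq_norm, norm_smul,
          Real.norm_of_nonneg measureReal_nonneg, ENNReal.ofReal_mul measureReal_nonneg,
          ofReal_measureReal, ofReal_norm, mul_comm]
    _ = ENNReal.ofReal ‖∑ x ∈ F.map (Embedding.subtype (· ∈ c)), w x‖ := by
        rw [norm_sum_of_nonneg hL fun _ _ => abs_nonneg _,
          ENNReal.ofReal_sum_of_nonneg fun _ _ => norm_nonneg _]
    _ ≤ ENNReal.ofReal (4 * ‖B‖) := by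
        refine ENNReal.ofReal_le_ofReal ((norm_le_norm_of_abs_le_abs ?_).trans (norm_nsmul_le ..))
        rw [abs_of_nonneg (Finset.sum_nonneg fun _ _ => abs_nonneg _),
          abs_of_nonneg (nsmul_nonneg hB0 4)]
        exact sum_abs_measureReal_smul_le hB hP hPγ hC hCP hCtag hF

variable [SecondCountableTopology T] [OpensMeasurableSpace T] [MeasurableSingletonClass T]

theorem exists_cover_tsum_enorm_sub_stepFun_mul_le
    (hL : ∀ x y : X, 0 ≤ x → 0 ≤ y → ‖x + y‖ = ‖x‖ + ‖y‖)
    (hB : ∀ Q : TaggedPart T univ, Q.IsHenstock → Q.IsFine γ → |Q.sum f μ - J| ≤ B)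
    (hγ : IsGage γ) (hP : P.IsHenstock) (hPγ : P.IsFine γ) {κ : Type*} {ρ : T → κ}
    (hρ : (range ρ).Countable) (hρm : ∀ j, MeasurableSet (ρ ⁻¹' {j})) {W : Set T}
    (hW : Disjoint W (range P.tag)) :
    ∃ c ⊆ W, c.Countable ∧ ∃ C : T → Set T, (∀ x ∈ c, MeasurableSet (C x)) ∧
      (∀ x ∈ c, C x ⊆ ρ ⁻¹' {ρ x}) ∧ W ⊆ ⋃ x ∈ c, C x ∧
      ∑' x : c, ‖f x - P.stepFun f x‖ₑ * μ (C x) ≤ ENNReal.ofReal (4 * ‖B‖) := by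
  have hρ' : (range fun x => (P.index x, ρ x)).Countable :=
    (countable_univ.prod hρ).mono
      (range_subset_iff.2 fun x => mk_mem_prod (mem_univ _) (mem_range_self x))
  have hρm' (j : Fin P.k × κ) : MeasurableSet ((fun x => (P.index x, ρ x)) ⁻¹' {j}) := by
    convert (P.measurable_index (measurableSet_singleton j.1)).inter (hρm j.2) using 1
    ext x; simp [Prod.ext_iff]
  obtain ⟨c, hcW, hc, C, hC, hCρ, hCtag, hcover⟩ :=
    exists_isFineTaggedFamily_cover hγ hρ' hρm' (countable_range P.tag) hW
  have hCP (x) (hx : x ∈ c) : C x ⊆ P.E (P.index x) := fun y hy =>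
    P.index_eq_iff.1 (Prod.ext_iff.1 (hCρ x hx hy)).1
  refine ⟨c, hcW, hc, C, hC.measurableSet, fun x hx y hy => (Prod.ext_iff.1 (hCρ x hx hy)).2,
    hcover, tsum_enorm_sub_stepFun_mul_le hL hB hP hPγ hC hCP hCtag⟩

theorem mul_meas_enorm_sub_stepFun_ge_le (hL : ∀ x y : X, 0 ≤ x → 0 ≤ y → ‖x + y‖ = ‖x‖ + ‖y‖)
    (hB : ∀ Q : TaggedPart T univ, Q.IsHenstock → Q.IsFine γ → |Q.sum f μ - J| ≤ B)
    (hγ : IsGage γ) (hP : P.IsHenstock) (hPγ : P.IsFine γ) {ε : ℝ≥0∞} (hε : ε ≠ 0) :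
    ε * μ {x | ε ≤ ‖f x - P.stepFun f x‖ₑ} ≤ ENNReal.ofReal (4 * ‖B‖) := by
  have hW : Disjoint {x | ε ≤ ‖f x - P.stepFun f x‖ₑ} (range P.tag) := by
    refine disjoint_right.2 ?_
    rintro _ ⟨i, rfl⟩
    simpa [P.stepFun_tag hP, pos_iff_ne_zero] using hε
  obtain ⟨c, hcW, hc, C, -, -, hcover, hsum⟩ := exists_cover_tsum_enorm_sub_stepFun_mul_le hL hB
    hγ hP hPγ (ρ := fun _ => ()) (range _).to_countable
    (fun _ => measurable_const (measurableSet_singleton _)) hW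
  calc ε * μ {x | ε ≤ ‖f x - P.stepFun f x‖ₑ}
      ≤ ε * ∑' x : c, μ (C x) := by
        gcongr; exact (measure_mono hcover).trans (measure_biUnion_le μ hc C)
    _ = ∑' x : c, ε * μ (C x) := ENNReal.tsum_mul_left.symm
    _ ≤ ∑' x : c, ‖f x - P.stepFun f x‖ₑ * μ (C x) := by gcongr with x; exact hcW x.2
    _ ≤ ENNReal.ofReal (4 * ‖B‖) := hsum

theorem tendstoInMeasure_stepFun (hL : ∀ x y : X, 0 ≤ x → 0 ≤ y → ‖x + y‖ = ‖x‖ + ‖y‖)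
    {b : ℕ → X} (hb : Tendsto (fun n => ‖b n‖) atTop (nhds 0)) {γ : ℕ → T → ℝ}
    (hB : ∀ n, ∀ Q : TaggedPart T univ, Q.IsHenstock → Q.IsFine (γ n) → |Q.sum f μ - J| ≤ b n)
    (hγ : ∀ n, IsGage (γ n)) {P : ℕ → TaggedPart T univ} (hP : ∀ n, (P n).IsHenstock)
    (hPγ : ∀ n, (P n).IsFine (γ n)) :
    TendstoInMeasure μ (fun n => (P n).stepFun f) atTop f := by
  intro ε hε
  have hlim : Tendsto (fun n => ENNReal.ofReal (4 * ‖b n‖) / ε) atTop (nhds 0) := by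
    simpa using ENNReal.Tendsto.div_const (ENNReal.tendsto_ofReal (hb.const_mul 4)) (.inr hε.ne')
  refine tendsto_of_tendsto_of_tendsto_of_le_of_le tendsto_const_nhds hlim (fun _ => bot_le)
    fun n => ?_
  rw [ENNReal.le_div_iff_mul_le (.inl hε.ne') (.inr ENNReal.ofReal_ne_top), mul_comm]
  simpa only [edist_comm, edist_eq_enorm_sub] using
    mul_meas_enorm_sub_stepFun_ge_le hL (hB n) (hγ n) (hP n) (hPγ n) hε.ne'

theorem lintegral_enorm_sub_stepFun_le (hL : ∀ x y : X, 0 ≤ x → 0 ≤ y → ‖x + y‖ = ‖x‖ + ‖y‖)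
    (hB : ∀ Q : TaggedPart T univ, Q.IsHenstock → Q.IsFine γ → |Q.sum f μ - J| ≤ B)
    (hγ : IsGage γ) (hP : P.IsHenstock) (hPγ : P.IsFine γ) :
    ∫⁻ x, ‖f x - P.stepFun f x‖ₑ ∂μ ≤ ENNReal.ofReal (4 * ‖B‖) := by
  -- `∫⁻` is a supremum over simple minorants, so no measurability of `f` is needed here.
  rw [lintegral]
  refine iSup₂_le fun s hs => ?_
  have hW : Disjoint {x | s x ≠ 0} (range P.tag) := by
    refine disjoint_right.2 ?_
    rintro _ ⟨i, rfl⟩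
    simpa [P.stepFun_tag hP] using hs (P.tag i)
  obtain ⟨c, hcW, hc, C, hCm, hCs, hcover, hsum⟩ := exists_cover_tsum_enorm_sub_stepFun_mul_le hL
    hB hγ hP hPγ s.finite_range.countable s.measurableSet_fiber hW
  have := hc.to_subtype
  have hs_le (y : T) : s y ≤ ∑' x : c, (C x).indicator (fun _ => s x) y := by
    by_cases hy : s y = 0
    · simp [hy]
    obtain ⟨x, hx, hyx⟩ := mem_iUnion₂.1 (hcover hy)
    calc s y = (C x).indicator (fun _ => s x) y := by rw [indicator_of_mem hyx, hCs x hx hyx]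
      _ ≤ _ := ENNReal.le_tsum (⟨x, hx⟩ : c)
  calc s.lintegral μ = ∫⁻ y, s y ∂μ := (s.lintegral_eq_lintegral μ).symm
    _ ≤ ∫⁻ y, ∑' x : c, (C x).indicator (fun _ => s x) y ∂μ := lintegral_mono hs_le
    _ = ∑' x : c, s x * μ (C x) := by
        rw [lintegral_tsum fun x : c => (measurable_const.indicator (hCm x x.2)).aemeasurable]
        exact tsum_congr fun x => lintegral_indicator_const (hCm x x.2) _
    _ ≤ ∑' x : c, ‖f x - P.stepFun f x‖ₑ * μ (C x) := by gcongr with x; exact hs x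
    _ ≤ ENNReal.ofReal (4 * ‖B‖) := hsum

end Estimates

end TaggedPart

theorem oH_bochner_of_Lspace_general {T : Type*} [MetricSpace T] [CompactSpace T] [MeasurableSpace T] [BorelSpace T]
    (μ : Measure T) [IsFiniteMeasure μ]
    {X : Type*} [NormedAddCommGroup X] [Lattice X] [HasSolidNorm X] [IsOrderedAddMonoid X] [NormedSpace ℝ X] [CompleteSpace X]
    (hL : ∀ x y : X, 0 ≤ x → 0 ≤ y → ‖x + y‖ = ‖x‖ + ‖y‖) (f : T → X) (J : X)
    (hf : HasOHIntegralOn f μ Set.univ J) :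
    Integrable f μ := by
  obtain ⟨b, hb, γ, hγ, hbound⟩ := hf
  choose P hP hPγ using fun n => TaggedPart.exists_isHenstock_isFine (hγ n)
  have hstep n : Integrable ((P n).stepFun f) μ := (P n).integrable_stepFun f μ
  have hmeas : AEStronglyMeasurable f μ :=
    (TaggedPart.tendstoInMeasure_stepFun hL (hb.tendsto_norm_zero hL) hbound hγ hP
      hPγ).aestronglyMeasurable fun n => (hstep n).aestronglyMeasurable
  have hsub : Integrable (f - (P 0).stepFun f) μ :=
    ⟨hmeas.sub (hstep 0).aestronglyMeasurable, ((P 0).lintegral_enorm_sub_stepFun_le hL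
      (hbound 0) (hγ 0) (hP 0) (hPγ 0)).trans_lt ENNReal.ofReal_lt_top⟩
  simpa using hsub.add (hstep 0)

theorem oH_bochner_of_Lspace {T : Type*} [MetricSpace T] [CompactSpace T] [MeasurableSpace T] [BorelSpace T]
    (μ : Measure T) [IsFiniteMeasure μ] [μ.Regular]
    {X : Type*} [NormedAddCommGroup X] [Lattice X] [HasSolidNorm X] [IsOrderedAddMonoid X] [NormedSpace ℝ X] [CompleteSpace X]
    (hL : ∀ x y : X, 0 ≤ x → 0 ≤ y → ‖x + y‖ = ‖x‖ + ‖y‖) (f : T → X) (J : X)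
    (hf : HasOHIntegralOn f μ Set.univ J) :
    Integrable f μ :=
  oH_bochner_of_Lspace_general μ hL f J hf
end
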